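/- In a one-to-one matching game with strict preferences, the matching produced by SBS-proposing deferred acceptance is optimal for the proposing side: every SBS is matched to its most preferred achievable partner, where a partner is achievable if some stable matching pairs them. -/
import Mathlib


/-- A one-to-one (partial) matching from SBSs `B` to clusters `C`. -/
def IsMatching {B C : Type*} (Υ : B → Option C) : Prop :=
  ∀ b b' : B, ∀ c : C, Υ b = some c → Υ b' = some c → b = b'

/-- `(b, c)` is a blocking pair of the matching `Υ`. -/
def IsBlockingPair {B C : Type*} (uB : B → C → ℝ) (uC : C → B → ℝ)
    (Υ : B → Option C) (b : B) (c : C) : Prop :=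
  (∀ c₀ : C, Υ b = some c₀ → uB b c₀ < uB b c) ∧
  (∀ b₀ : B, Υ b₀ = some c → uC c b₀ < uC c b)

/-- A matching is stable if it admits no blocking pair. -/
def IsStableMatching {B C : Type*} (uB : B → C → ℝ) (uC : C → B → ℝ)
    (Υ : B → Option C) : Prop :=
  IsMatching Υ ∧ ∀ b c, ¬ IsBlockingPair uB uC Υ b c

/-- A cluster `c` is achievable for SBS `b` if some stable matching pairs them. -/
def Achievable {B C : Type*} (uB : B → C → ℝ) (uC : C → B → ℝ) (b : B) (c : C) : Prop :=
  ∃ Υ : B → Option C, IsStableMatching uB uC Υ ∧ Υ b = some c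

section DA

open Classical

variable {B C : Type*} [Fintype B] [Fintype C]

/-- The best element of a finite set according to a utility function. -/
noncomputable def bestIn (f : C → ℝ) (s : Finset C) : Option C :=
  if h : s.Nonempty then some (Finset.exists_max_image s f h).choose else none

lemma bestIn_spec {f : C → ℝ} {s : Finset C} {c : C} (h : bestIn f s = some c) :
    c ∈ s ∧ ∀ d ∈ s, f d ≤ f c := by
  unfold bestIn at h
  split_ifs at h with hs
  · obtain ⟨hm, hmax⟩ := (Finset.exists_max_image s f hs).choose_spec
    cases h
    exact ⟨hm, hmax⟩

lemma bestIn_eq {f : C → ℝ} (hf : Function.Injective f) {s : Finset C} {c : C}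
    (hc : c ∈ s) (hmax : ∀ d ∈ s, f d ≤ f c) : bestIn f s = some c := by
  have hs : s.Nonempty := ⟨c, hc⟩
  obtain ⟨hm, hmax'⟩ := (Finset.exists_max_image s f hs).choose_spec
  have : f (Finset.exists_max_image s f hs).choose = f c :=
    le_antisymm (hmax _ hm) (hmax' c hc)
  unfold bestIn
  rw [dif_pos hs, hf this]

lemma bestIn_isSome {f : C → ℝ} {s : Finset C} (hs : s.Nonempty) :
    ∃ c, bestIn f s = some c := by
  unfold bestIn
  rw [dif_pos hs]
  exact ⟨_, rfl⟩

/-- Core of deferred acceptance: strong induction on the total size of the sets of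
clusters that have not yet rejected each SBS. -/
theorem da_aux (uB : B → C → ℝ) (uC : C → B → ℝ)
    (hB : ∀ b, Function.Injective (uB b)) (hC : ∀ c, Function.Injective (uC c)) :
    ∀ n (R : B → Finset C), (∑ b, (R b).card) = n →
    (∀ b c, Achievable uB uC b c → c ∈ R b) →
    (∀ b c, c ∉ R b → ∃ b', bestIn (uB b') (R b') = some c ∧ uC c b < uC c b') →
    ∃ Υ : B → Option C, IsStableMatching uB uC Υ ∧
      ∀ b c, Achievable uB uC b c → ∃ c', Υ b = some c' ∧ uB b c ≤ uB b c' := by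
  intro n
  induction n using Nat.strong_induction_on with
  | _ n ih =>
    intro R hn inv1 inv2
    -- rejection predicate
    set Rej : B → C → Prop := fun b c =>
      bestIn (uB b) (R b) = some c ∧ ∃ b', bestIn (uB b') (R b') = some c ∧ uC c b < uC c b'
      with hRej
    by_cases hrej : ∃ b c, Rej b c
    · -- a rejection happens: perform one round
      obtain ⟨b₀, c₀, hb₀⟩ := hrej
      set R' : B → Finset C := fun b => (R b).filter (fun c => ¬ Rej b c) with hR'
      have hsub : ∀ b, R' b ⊆ R b := fun b => Finset.filter_subset _ _
      -- for any cluster with at least one proposer, there is a surviving top proposer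
      have key : ∀ c : C, (∃ b, bestIn (uB b) (R b) = some c) →
          ∃ bs, bestIn (uB bs) (R' bs) = some c ∧
            ∀ b, bestIn (uB b) (R b) = some c → uC c b ≤ uC c bs := by
        intro c ⟨bw, hbw⟩
        set P : Finset B := Finset.univ.filter (fun b => bestIn (uB b) (R b) = some c) with hP
        have hPne : P.Nonempty := ⟨bw, by simp [hP, hbw]⟩
        obtain ⟨bs, hbsP, hbsmax⟩ := Finset.exists_max_image P (uC c) hPne
        have hbs : bestIn (uB bs) (R bs) = some c := by
          simpa [hP] using hbsP
        have hmax' : ∀ b, bestIn (uB b) (R b) = some c → uC c b ≤ uC c bs := by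
          intro b hb
          exact hbsmax b (by simp [hP, hb])
        refine ⟨bs, ?_, hmax'⟩
        -- bs is not rejected by c
        have hnotrej : ¬ Rej bs c := by
          rintro ⟨-, b', hb', hlt⟩
          exact absurd (hmax' b' hb') (not_le_of_gt hlt)
        obtain ⟨hcmem, hctop⟩ := bestIn_spec hbs
        have hcmem' : c ∈ R' bs := Finset.mem_filter.mpr ⟨hcmem, hnotrej⟩
        exact bestIn_eq (hB bs) hcmem' (fun d hd => hctop d (hsub bs hd))
      -- cardinality decreases
      have hcard : ∑ b, (R' b).card < n := by
        rw [← hn]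
        refine Finset.sum_lt_sum (fun b _ => Finset.card_le_card (hsub b)) ⟨b₀, Finset.mem_univ _, ?_⟩
        refine Finset.card_lt_card (Finset.ssubset_iff_of_subset (hsub b₀) |>.mpr ?_)
        refine ⟨c₀, (bestIn_spec hb₀.1).1, ?_⟩
        simp only [R', Finset.mem_filter, not_and, not_not]
        intro _
        exact hb₀
      -- invariant 1 preserved
      have inv1' : ∀ b c, Achievable uB uC b c → c ∈ R' b := by
        intro b c hach
        refine Finset.mem_filter.mpr ⟨inv1 b c hach, ?_⟩
        rintro ⟨hbc, b', hb', hlt⟩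
        obtain ⟨Υ, ⟨hmatch, hstable⟩, hΥb⟩ := hach
        have hbne : b ≠ b' := fun h => by subst h; exact lt_irrefl _ hlt
        refine hstable b' c ⟨?_, ?_⟩
        · intro c₁ hc₁
          have hach' : Achievable uB uC b' c₁ := ⟨Υ, ⟨hmatch, hstable⟩, hc₁⟩
          have hc₁mem : c₁ ∈ R b' := inv1 b' c₁ hach'
          have hle : uB b' c₁ ≤ uB b' c := (bestIn_spec hb').2 c₁ hc₁mem
          rcases lt_or_eq_of_le hle with h | h
          · exact h
          · exact absurd (hmatch b b' c hΥb (by rw [hB b' h] at hc₁; exact hc₁)).symm hbne.symm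
        · intro b₁ hb₁
          have : b₁ = b := hmatch b₁ b c hb₁ hΥb
          rw [this]; exact hlt
      -- invariant 2 preserved
      have inv2' : ∀ b c, c ∉ R' b →
          ∃ b', bestIn (uB b') (R' b') = some c ∧ uC c b < uC c b' := by
        intro b c hc
        by_cases hcR : c ∈ R b
        · -- newly rejected: Rej b c holds
          have hrejbc : Rej b c := by
            by_contra h
            exact hc (Finset.mem_filter.mpr ⟨hcR, h⟩)
          obtain ⟨hbc, b', hb', hlt⟩ := hrejbc
          obtain ⟨bs, hbs, hbsmax⟩ := key c ⟨b', hb'⟩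
          exact ⟨bs, hbs, lt_of_lt_of_le hlt (hbsmax b' hb')⟩
        · -- old rejection
          obtain ⟨b', hb', hlt⟩ := inv2 b c hcR
          obtain ⟨bs, hbs, hbsmax⟩ := key c ⟨b', hb'⟩
          exact ⟨bs, hbs, lt_of_lt_of_le hlt (hbsmax b' hb')⟩
      exact ih _ hcard R' rfl inv1' inv2'
    · -- no rejection: the current proposals form a stable matching
      push_neg at hrej
      set Υ : B → Option C := fun b => bestIn (uB b) (R b) with hΥ
      have hmatch : IsMatching Υ := by
        intro b b' c hb hb'
        by_contra hne
        rcases lt_trichotomy (uC c b) (uC c b') with h | h | h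
        · exact hrej b c ⟨hb, b', hb', h⟩
        · exact hne (hC c h)
        · exact hrej b' c ⟨hb', b, hb, h⟩
      refine ⟨Υ, ⟨hmatch, ?_⟩, ?_⟩
      · -- stability
        rintro b c ⟨hbpref, hcpref⟩
        by_cases hcR : c ∈ R b
        · obtain ⟨c', hc'⟩ := bestIn_isSome (f := uB b) ⟨c, hcR⟩
          have h1 : uB b c ≤ uB b c' := (bestIn_spec hc').2 c hcR
          have h2 : uB b c' < uB b c := hbpref c' hc'
          exact absurd h1 (not_le_of_gt h2)
        · obtain ⟨b', hb', hlt⟩ := inv2 b c hcR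
          exact absurd (hcpref b' hb') (not_lt_of_gt hlt)
      · -- optimality
        intro b c hach
        have hcR : c ∈ R b := inv1 b c hach
        obtain ⟨c', hc'⟩ := bestIn_isSome (f := uB b) ⟨c, hcR⟩
        exact ⟨c', hc', (bestIn_spec hc').2 c hcR⟩

end DA

/-- SBS-optimality of SBS-proposing deferred acceptance: there is a stable
matching `Υ` in which every SBS is matched to its most preferred achievable
partner, i.e. for every achievable `c` for `b`, `b` is matched in `Υ` to some
cluster it weakly prefers to `c`. -/
theorem deferred_acceptance_proposer_optimal {B C : Type*} [Fintype B] [Fintype C]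
    (uB : B → C → ℝ) (uC : C → B → ℝ)
    (hB : ∀ b, Function.Injective (uB b)) (hC : ∀ c, Function.Injective (uC c)) :
    ∃ Υ : B → Option C, IsStableMatching uB uC Υ ∧
      ∀ b c, Achievable uB uC b c → ∃ c', Υ b = some c' ∧ uB b c ≤ uB b c' := by
  exact da_aux uB uC hB hC _ (fun _ => Finset.univ) rfl
    (fun b c _ => Finset.mem_univ c)
    (fun b c hc => absurd (Finset.mem_univ c) hc)
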